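/- DCA descent property: let F₁, F₂ : ℝ^n → ℝ with F₂ convex, let x_k ∈ ℝ^n, let u ∈ ℝ^n be a subgradient of F₂ at x_k (i.e., F₂(y) ≥ F₂(x_k) + ⟨u, y − x_k⟩ for all y), and let x_{k+1} be a global minimizer of the convex subproblem y ↦ F₁(y) − ⟨u, y⟩. Then F₁(x_{k+1}) − F₂(x_{k+1}) ≤ F₁(x_k) − F₂(x_k); that is, one DCA iteration does not increase the DC objective F = F₁ − F₂. -/

import Mathlib

open RealInnerProductSpace

theorem dca_descent_general (n : ℕ) (F₁ F₂ : EuclideanSpace ℝ (Fin n) → ℝ)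
    (xk xk1 u : EuclideanSpace ℝ (Fin n))
    (hu : ∀ y, F₂ y ≥ F₂ xk + ⟪u, y - xk⟫)
    (hmin : ∀ y, F₁ xk1 - ⟪u, xk1⟫ ≤ F₁ y - ⟪u, y⟫) :
    F₁ xk1 - F₂ xk1 ≤ F₁ xk - F₂ xk :=
  calc F₁ xk1 - F₂ xk1
      ≤ F₁ xk1 - (F₂ xk + ⟪u, xk1 - xk⟫) := by linarith [hu xk1]
    _ = (F₁ xk1 - ⟪u, xk1⟫) - F₂ xk + ⟪u, xk⟫ := by rw [inner_sub_right]; ring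
    _ ≤ (F₁ xk - ⟪u, xk⟫) - F₂ xk + ⟪u, xk⟫ := by linarith [hmin xk]
    _ = F₁ xk - F₂ xk := by ring

/-- DCA descent property: if `F₂` is convex, `u` is a subgradient of `F₂` at `x_k`, and
`x_{k+1}` globally minimizes the convex subproblem `y ↦ F₁(y) − ⟨u, y⟩`, then
`F₁(x_{k+1}) − F₂(x_{k+1}) ≤ F₁(x_k) − F₂(x_k)`. -/
theorem dca_descent (n : ℕ) (F₁ F₂ : EuclideanSpace ℝ (Fin n) → ℝ)
    (hF₂ : ConvexOn ℝ Set.univ F₂)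
    (xk xk1 u : EuclideanSpace ℝ (Fin n))
    (hu : ∀ y, F₂ y ≥ F₂ xk + ⟪u, y - xk⟫)
    (hmin : ∀ y, F₁ xk1 - ⟪u, xk1⟫ ≤ F₁ y - ⟪u, y⟫) :
    F₁ xk1 - F₂ xk1 ≤ F₁ xk - F₂ xk :=
  dca_descent_general n F₁ F₂ xk xk1 u hu hmin
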